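/- arXiv:2411.07093 — 2 statements merged into one kernel-verified Lean document; each statement's English description precedes it below -/
import Mathlib

section
/- Assume the two compatibility conditions $(S_1)$: $B_{n+1}+B_n=(x-\alpha_n)A_n-\mathrm{v}'$ and $(S_2)$: $1+(x-\alpha_n)(B_{n+1}-B_n)=\beta_{n+1}A_{n+1}-\beta_nA_{n-1}$ for all $n\ge0$, together with $B_0=0$ and $\beta_0A_{-1}=0$. Then the summed condition $(S_2')$ holds: $B_n^2+\mathrm{v}'B_n+\sum_{j=0}^{n-1}A_j=\beta_nA_nA_{n-1}$ for all $n\ge0$. -/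
/-- From the compatibility conditions `(S₁)` and `(S₂)` together
with `B 0 = 0` and `β 0 = 0` (encoding `β₀ A₋₁ = 0`), the summed condition
`(S₂')` follows. Here everything is evaluated at a fixed `x`, so `A n`, `B n`
are real numbers. -/
theorem compatibility_S2'
    (x v' : ℝ) (α β A B : ℕ → ℝ)
    (hβ0 : β 0 = 0) (hB0 : B 0 = 0)
    (hS1 : ∀ n, B (n+1) + B n = (x - α n) * A n - v')
    (hS2 : ∀ n, 1 + (x - α n) * (B (n+1) - B n)
      = β (n+1) * A (n+1) - β n * A (n-1)) :
    ∀ n, (B n)^2 + v' * B n + ∑ j ∈ Finset.range n, A j = β n * A n * A (n-1) := by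
  intro n
  induction n with
  | zero => simp [hB0, hβ0]
  | succ n ih =>
    rw [Finset.sum_range_succ]
    simp only [Nat.add_sub_cancel]
    linear_combination ih + A n * hS2 n + (B (n+1) - B n) * hS1 n
end

section
/- Suppose the real numbers $\alpha_n,\beta_n,R_n,r_n$ satisfy $\beta_{n+1}+\beta_n=R_n-\alpha_n^2+t$, $r_{n+1}+r_n=\lambda-\alpha_nR_n$, $r_n+n=\beta_n(\alpha_n+\alpha_{n-1})$, and $r_n^2-\lambda r_n=\beta_nR_nR_{n-1}$. Then the recurrence coefficients satisfy the discrete system: $\alpha_n^3-t\alpha_n+(2\alpha_n+\alpha_{n-1})\beta_n+(2\alpha_n+\alpha_{n+1})\beta_{n+1}=2n+\lambda+1$ and $[(\alpha_n+\alpha_{n-1})\beta_n-n]^2-\lambda[(\alpha_n+\alpha_{n-1})\beta_n-n]=\beta_n(\alpha_n^2+\beta_n+\beta_{n+1}-t)(\alpha_{n-1}^2+\beta_{n-1}+\beta_n-t)$. -/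
/-- The discrete system for the recurrence coefficients of the
generalized Airy polynomials, obtained by eliminating the auxiliary
quantities `R_n, r_n`. -/
theorem airy_discrete_system
    (t lam : ℝ) (α β R r : ℕ → ℝ)
    (h1 : ∀ n, β (n+1) + β n = R n - (α n)^2 + t)
    (h2 : ∀ n, r (n+1) + r n = lam - α n * R n)
    (h3 : ∀ n : ℕ, 1 ≤ n → r n + (n:ℝ) = β n * (α n + α (n-1)))
    (h4 : ∀ n : ℕ, 1 ≤ n → (r n)^2 - lam * r n = β n * R n * R (n-1)) :
    ∀ n : ℕ, 1 ≤ n →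
      ((α n)^3 - t * α n + (2 * α n + α (n-1)) * β n
          + (2 * α n + α (n+1)) * β (n+1) = 2 * (n:ℝ) + lam + 1) ∧
      (((α n + α (n-1)) * β n - (n:ℝ))^2
          - lam * ((α n + α (n-1)) * β n - (n:ℝ))
        = β n * ((α n)^2 + β n + β (n+1) - t)
            * ((α (n-1))^2 + β (n-1) + β n - t)) := by
  rintro n hn
  obtain ⟨m, rfl⟩ := Nat.exists_eq_add_of_le hn
  simp only [Nat.add_sub_cancel_left] at *
  have e1 := h1 (1 + m)
  have e1' := h1 m
  have e2 := h2 (1 + m)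
  have e3 := h3 (1 + m) (Nat.le_add_right 1 m)
  have e3' := h3 (1 + m + 1) (by omega)
  have e4 := h4 (1 + m) (Nat.le_add_right 1 m)
  simp only [Nat.add_sub_cancel_left, show 1 + m + 1 - 1 = 1 + m from by omega,
    show m + 1 = 1 + m from by omega] at *
  push_cast at *
  have hR : R (1+m) = β (1+m+1) + β (1+m) + α (1+m)^2 - t := by linarith
  have hR' : R m = β (1+m) + β m + α m ^2 - t := by linarith
  have hr : r (1+m) = β (1+m) * (α (1+m) + α m) - (1 + (m:ℝ)) := by linarith
  have hr' : r (1+m+1) = β (1+m+1) * (α (1+m+1) + α (1+m)) - (1 + (m:ℝ) + 1) := by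
    linarith
  rw [hr, hr', hR] at e2
  rw [hr, hR, hR'] at e4
  constructor
  · linear_combination e2
  · linear_combination e4
end
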